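/- arXiv:1511.03299 — 6 statements merged into one kernel-verified Lean document; each statement's English description precedes it below -/
import Mathlib

section
/- Let (Y_1,...,Y_n, A_1,...,A_n) be {0,1}-valued random variables with joint pmf p on a finite probability space, and suppose P(Y=y) > 0 for every y ∈ {0,1}^n. Assume that for each k, A_k is conditionally independent of the joint vector of all other variables (Y_j for j ≠ k and A_j for j ≠ k) given Y_k. Then for every a ∈ {0,1}^n: P(A_1=a_1,...,A_n=a_n) = Σ_{y ∈ {0,1}^n} P(Y=y) · Π_{k=1}^n P(A_k=a_k | Y_k=y_k). -/
/-!
Fix `y`. Conditional independence of `A k` from everything else given `Y k` says that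
`g a := P(Y = y, A = a)` satisfies `g a = P(A k = a k | Y k = y k) * ∑ c, g (update a k c)`.
Marginalising out one coordinate preserves this identity in the remaining coordinates, so
induction on `n` gives `g a = P(Y = y) ∏ₖ P(A k = a k | Y k = y k)`, even before summing over `y`.
-/

open Finset

theorem Fin.sum_cons_eq_sum {R β : Type*} [AddCommMonoid R] [Fintype β] {n : ℕ}
    (g : (Fin (n + 1) → β) → R) :
    ∑ t : Fin n → β, ∑ c, g (Fin.cons c t) = ∑ b, g b := by
  rw [← Fintype.sum_equiv (Fin.consEquiv fun _ => β) (fun x => g (Fin.cons x.1 x.2)) g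
    (fun _ => rfl), Fintype.sum_prod_type, Finset.sum_comm]

theorem eq_sum_mul_prod_of_forall_eq_mul_sum_update {R β : Type*} [CommSemiring R] [Fintype β]
    {n : ℕ} (g : (Fin n → β) → R) (r : Fin n → β → R)
    (h : ∀ k a, g a = r k (a k) * ∑ c, g (Function.update a k c)) (a : Fin n → β) :
    g a = (∑ b, g b) * ∏ k, r k (a k) := by
  induction n with
  | zero => simp [Unique.eq_default a]
  | succ n ih =>
    set g' : (Fin n → β) → R := fun t => ∑ c, g (Fin.cons c t)
    have hg' : ∀ k t, g' t = r k.succ (t k) * ∑ d, g' (Function.update t k d) := by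
      intro k t
      simp only [g', Finset.mul_sum, Fin.cons_update]
      rw [Finset.sum_comm]
      refine Finset.sum_congr rfl fun c _ => ?_
      rw [h k.succ, Fin.cons_succ, Finset.mul_sum]
    obtain ⟨c, t, rfl⟩ : ∃ c t, a = Fin.cons c t := ⟨a 0, Fin.tail a, (Fin.cons_self_tail a).symm⟩
    calc g (Fin.cons c t : Fin (n + 1) → β) = r 0 c * g' t := by
          rw [h 0, Fin.cons_zero]
          simp only [g', Fin.update_cons_zero]
      _ = r 0 c * ((∑ t', g' t') * ∏ k, r k.succ (t k)) := by rw [ih g' _ hg']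
      _ = (∑ b, g b) * ∏ k, r k ((Fin.cons c t : Fin (n + 1) → β) k) := by
          rw [Fin.prod_univ_succ, Fin.sum_cons_eq_sum]
          simp only [Fin.cons_zero, Fin.cons_succ]
          ring

theorem sum_sum_ite_apply_eq_pos {ι α β : Type*} [Fintype ι] [DecidableEq ι] [Fintype α]
    [DecidableEq α] [Fintype β]
    {p : (ι → α) × β → ℝ} (hnn : ∀ ω, 0 ≤ p ω) (hY : ∀ y, 0 < ∑ a, p (y, a)) (k : ι) (b : α) :
    0 < ∑ y, ∑ a, if y k = b then p (y, a) else 0 := by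
  have hterm : ∀ y, 0 ≤ ∑ a, if y k = b then p (y, a) else 0 := fun y =>
    Finset.sum_nonneg fun a _ => by split_ifs <;> simp [hnn]
  calc 0 < ∑ a, p (fun _ => b, a) := hY _
    _ ≤ _ := by
      simpa using Finset.single_le_sum (f := fun y => ∑ a, if y k = b then p (y, a) else 0)
        (fun y _ => hterm y) (Finset.mem_univ fun _ => b)

theorem anchor_moments_general (n : ℕ) (p : (Fin n → Bool) × (Fin n → Bool) → ℝ)
    (hnn : ∀ ω, 0 ≤ p ω)
    (hY : ∀ y : Fin n → Bool, 0 < ∑ a : Fin n → Bool, p (y, a))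
    (hCI : ∀ (k : Fin n) (y a : Fin n → Bool),
      p (y, a) /
          (∑ y' : Fin n → Bool, ∑ a' : Fin n → Bool,
            if y' k = y k then p (y', a') else 0) =
        ((∑ y' : Fin n → Bool, ∑ a' : Fin n → Bool,
            if y' k = y k ∧ a' k = a k then p (y', a') else 0) /
          (∑ y' : Fin n → Bool, ∑ a' : Fin n → Bool,
            if y' k = y k then p (y', a') else 0)) *
        ((∑ c : Bool, p (y, Function.update a k c)) /
          (∑ y' : Fin n → Bool, ∑ a' : Fin n → Bool,
            if y' k = y k then p (y', a') else 0))) :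
    ∀ a : Fin n → Bool,
      (∑ y : Fin n → Bool, p (y, a)) =
        ∑ y : Fin n → Bool, (∑ a' : Fin n → Bool, p (y, a')) *
          ∏ k : Fin n,
            ((∑ y' : Fin n → Bool, ∑ a' : Fin n → Bool,
                if y' k = y k ∧ a' k = a k then p (y', a') else 0) /
              (∑ y' : Fin n → Bool, ∑ a' : Fin n → Bool,
                if y' k = y k then p (y', a') else 0)) := by
  intro a
  refine Finset.sum_congr rfl fun y _ => ?_
  set Q : Fin n → Bool → ℝ := fun k b => ∑ y' : Fin n → Bool, ∑ a' : Fin n → Bool,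
    if y' k = b then p (y', a') else 0
  set R : Fin n → Bool → Bool → ℝ := fun k b c => ∑ y' : Fin n → Bool, ∑ a' : Fin n → Bool,
    if y' k = b ∧ a' k = c then p (y', a') else 0
  refine eq_sum_mul_prod_of_forall_eq_mul_sum_update (fun a => p (y, a))
    (fun k c => R k (y k) c / Q k (y k)) (fun k a => ?_) a
  have hCIka := hCI k y a
  rwa [mul_div_assoc', div_left_inj' (sum_sum_ite_apply_eq_pos hnn hY k (y k)).ne'] at hCIka

/-- Anchored moments identity: if each `A k` is conditionally independent of all
other variables given `Y k`, then the joint distribution of the anchors is the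
mixture `∑_y P(Y=y) ∏_k P(A_k = a_k | Y_k = y_k)`. -/
theorem anchor_moments (n : ℕ) (p : (Fin n → Bool) × (Fin n → Bool) → ℝ)
    (hnn : ∀ ω, 0 ≤ p ω) (hsum : ∑ ω, p ω = 1)
    (hY : ∀ y : Fin n → Bool, 0 < ∑ a : Fin n → Bool, p (y, a))
    (hCI : ∀ (k : Fin n) (y a : Fin n → Bool),
      p (y, a) /
          (∑ y' : Fin n → Bool, ∑ a' : Fin n → Bool,
            if y' k = y k then p (y', a') else 0) =
        ((∑ y' : Fin n → Bool, ∑ a' : Fin n → Bool,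
            if y' k = y k ∧ a' k = a k then p (y', a') else 0) /
          (∑ y' : Fin n → Bool, ∑ a' : Fin n → Bool,
            if y' k = y k then p (y', a') else 0)) *
        ((∑ c : Bool, p (y, Function.update a k c)) /
          (∑ y' : Fin n → Bool, ∑ a' : Fin n → Bool,
            if y' k = y k then p (y', a') else 0))) :
    ∀ a : Fin n → Bool,
      (∑ y : Fin n → Bool, p (y, a)) =
        ∑ y : Fin n → Bool, (∑ a' : Fin n → Bool, p (y, a')) *
          ∏ k : Fin n,
            ((∑ y' : Fin n → Bool, ∑ a' : Fin n → Bool,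
                if y' k = y k ∧ a' k = a k then p (y', a') else 0) /
              (∑ y' : Fin n → Bool, ∑ a' : Fin n → Bool,
                if y' k = y k then p (y', a') else 0)) :=
  anchor_moments_general n p hnn hY hCI
end

section
/- Fix n ≥ 1 and for each k ∈ {1,...,n} a function r_k : {0,1} × {0,1} → ℝ satisfying r_k(0,z) + r_k(1,z) = 1 for each z ∈ {0,1} and r_k(1,0) ≠ r_k(1,1). Let R(a, z) = Π_{k=1}^n r_k(a_k, z_k) for (a, z) ∈ {0,1}^n × {0,1}^n. If μ, μ' : {0,1}^n → ℝ satisfy Σ_{z ∈ {0,1}^n} R(a, z) μ(z) = Σ_{z ∈ {0,1}^n} R(a, z) μ'(z) for every a ∈ {0,1}^n, then μ = μ'. In particular, the distribution of the latent variables is uniquely determined by the distribution of their anchors. -/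
/-!
The matrix `R(a, z) = ∏ₖ rₖ(aₖ, zₖ)` is the `n`-fold Kronecker product of the `2 × 2` matrices
`rₖ`, and taking Kronecker products is multiplicative, so `R` is invertible as soon as every `rₖ`
is. Since the columns of `rₖ` sum to one, `det rₖ = rₖ(1,1) - rₖ(1,0) ≠ 0`. Hence `μ ↦ Rμ` is
injective.
-/

open Finset

namespace Matrix

section PiKronecker

variable {ι α β γ R : Type*} [Fintype ι] [CommSemiring R]

def piKronecker (M : ι → Matrix α β R) : Matrix (ι → α) (ι → β) R :=
  of fun a b => ∏ k, M k (a k) (b k)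

@[simp]
theorem piKronecker_apply (M : ι → Matrix α β R) (a : ι → α) (b : ι → β) :
    piKronecker M a b = ∏ k, M k (a k) (b k) := rfl

theorem piKronecker_mul [DecidableEq ι] [Fintype β] (M : ι → Matrix α β R)
    (N : ι → Matrix β γ R) :
    piKronecker (fun k => M k * N k) = piKronecker M * piKronecker N := by
  ext a c
  simp only [piKronecker_apply, mul_apply, Fintype.prod_sum, prod_mul_distrib]

theorem piKronecker_one [DecidableEq α] :
    piKronecker (fun _ : ι => (1 : Matrix α α R)) = 1 := by
  ext a b
  simp only [piKronecker_apply, one_apply, Fintype.prod_boole, funext_iff]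

def piKroneckerHom [DecidableEq ι] [Fintype α] [DecidableEq α] :
    (ι → Matrix α α R) →* Matrix (ι → α) (ι → α) R where
  toFun := piKronecker
  map_one' := piKronecker_one
  map_mul' := piKronecker_mul

theorem isUnit_piKronecker [DecidableEq ι] [Fintype α] [DecidableEq α]
    {M : ι → Matrix α α R} (hM : ∀ k, IsUnit (M k)) : IsUnit (piKronecker M) :=
  (Pi.isUnit_iff.mpr hM).map piKroneckerHom

end PiKronecker

section Bool

variable {R : Type*} [CommRing R]

theorem det_bool (A : Matrix Bool Bool R) :
    A.det = A false false * A true true - A false true * A true false := by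
  rw [← det_reindex_self finTwoEquiv.symm, det_fin_two]
  rfl

theorem det_bool_of_column_sums_eq_one {A : Matrix Bool Bool R}
    (hA : ∀ z, A false z + A true z = 1) : A.det = A true true - A true false := by
  rw [det_bool, eq_sub_of_add_eq (hA false), eq_sub_of_add_eq (hA true)]
  ring

end Bool

end Matrix

theorem anchor_moment_map_injective_general (n : ℕ) (r : Fin n → Bool → Bool → ℝ)
    (hsum : ∀ k z, r k false z + r k true z = 1)
    (hneq : ∀ k, r k true false ≠ r k true true)
    (μ μ' : (Fin n → Bool) → ℝ)
    (h : ∀ a : Fin n → Bool,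
      ∑ z : Fin n → Bool, (∏ k : Fin n, r k (a k) (z k)) * μ z =
        ∑ z : Fin n → Bool, (∏ k : Fin n, r k (a k) (z k)) * μ' z) :
    μ = μ' := by
  let M : Fin n → Matrix Bool Bool ℝ := fun k => Matrix.of (r k)
  have hM : ∀ k, IsUnit (M k) := fun k => by
    rw [Matrix.isUnit_iff_isUnit_det, isUnit_iff_ne_zero,
      Matrix.det_bool_of_column_sums_eq_one (A := M k) (hsum k)]
    exact sub_ne_zero.mpr (hneq k).symm
  exact Matrix.mulVec_injective_of_isUnit (Matrix.isUnit_piKronecker hM) (funext h)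

/-- The distribution of the latent variables is uniquely determined by the
distribution of their anchors: the map `μ ↦ Rμ` is injective. -/
theorem anchor_moment_map_injective (n : ℕ) (hn : 1 ≤ n) (r : Fin n → Bool → Bool → ℝ)
    (hsum : ∀ k z, r k false z + r k true z = 1)
    (hneq : ∀ k, r k true false ≠ r k true true)
    (μ μ' : (Fin n → Bool) → ℝ)
    (h : ∀ a : Fin n → Bool,
      ∑ z : Fin n → Bool, (∏ k : Fin n, r k (a k) (z k)) * μ z =
        ∑ z : Fin n → Bool, (∏ k : Fin n, r k (a k) (z k)) * μ' z) :
    μ = μ' :=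
  anchor_moment_map_injective_general n r hsum hneq μ μ' h
end

section
/- There exist functions μ_{12}, μ_{23}, μ_{13} : {0,1} × {0,1} → ℝ, each with nonnegative entries summing to 1, whose induced single-variable marginals are locally consistent (for each variable j ∈ {1,2,3} and each value b ∈ {0,1}, every pairwise table involving variable j assigns the same total probability to the event that variable j takes value b), yet there is no pmf p on {0,1}^3 whose pairwise marginals Σ_{y : y_i=a, y_j=b} p(y) equal μ_{ij}(a,b) for all pairs i < j. Hence the local consistency polytope strictly contains the marginal polytope. -/
open Finset

/-- The local consistency polytope strictly contains the marginal polytope: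
there are locally consistent pairwise tables on three binary variables that are
not the pairwise marginals of any joint pmf. -/
theorem local_polytope_strictly_contains_marginal_polytope :
    ∃ μ12 μ23 μ13 : Bool → Bool → ℝ,
      (∀ a b, 0 ≤ μ12 a b) ∧ (∀ a b, 0 ≤ μ23 a b) ∧ (∀ a b, 0 ≤ μ13 a b) ∧
      (∑ a : Bool, ∑ b : Bool, μ12 a b) = 1 ∧
      (∑ a : Bool, ∑ b : Bool, μ23 a b) = 1 ∧
      (∑ a : Bool, ∑ b : Bool, μ13 a b) = 1 ∧
      (∀ a : Bool, (∑ b : Bool, μ12 a b) = ∑ c : Bool, μ13 a c) ∧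
      (∀ b : Bool, (∑ a : Bool, μ12 a b) = ∑ c : Bool, μ23 b c) ∧
      (∀ c : Bool, (∑ b : Bool, μ23 b c) = ∑ a : Bool, μ13 a c) ∧
      ¬ ∃ p : Bool × Bool × Bool → ℝ,
          (∀ y, 0 ≤ p y) ∧ (∑ y : Bool × Bool × Bool, p y) = 1 ∧
          (∀ a b : Bool, (∑ c : Bool, p (a, b, c)) = μ12 a b) ∧
          (∀ b c : Bool, (∑ a : Bool, p (a, b, c)) = μ23 b c) ∧
          (∀ a c : Bool, (∑ b : Bool, p (a, b, c)) = μ13 a c) := by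
  refine ⟨fun a b => if a = b then 0 else 1/2,
          fun a b => if a = b then 0 else 1/2,
          fun a b => if a = b then 0 else 1/2, ?_, ?_, ?_, ?_, ?_, ?_, ?_, ?_, ?_, ?_⟩
  · intro a b; dsimp only; split <;> norm_num
  · intro a b; dsimp only; split <;> norm_num
  · intro a b; dsimp only; split <;> norm_num
  · simp [Fintype.sum_bool]; norm_num
  · simp [Fintype.sum_bool]; norm_num
  · simp [Fintype.sum_bool]; norm_num
  · intro a; cases a <;> simp
  · intro b; cases b <;> simp
  · intro c; cases c <;> simp
  · rintro ⟨p, hpos, hsum, h12, h23, h13⟩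
    simp only [Fintype.sum_prod_type, Fintype.sum_bool] at hsum h12 h23 h13
    have k1 := h12 false false
    have k2 := h12 true true
    have k3 := h23 false false
    have k4 := h23 true true
    have k5 := h13 false false
    have k6 := h13 true true
    norm_num at k1 k2 k3 k4 k5 k6
    linarith [hpos (false,false,false), hpos (false,false,true), hpos (false,true,false),
      hpos (false,true,true), hpos (true,false,false), hpos (true,false,true),
      hpos (true,true,false), hpos (true,true,true)]
end

section
/- Let q : {0,1}^m → ℝ be a pmf describing the joint distribution of latent variables Y_1,...,Y_m, let l ∈ [0,1) and f : {1,...,m} → ℝ with 0 < f_i ≤ 1 for all i, and let S(y) = (1-l)·Π_{i=1}^m (f_i)^{[y_i]}. Fix an index i, a subset B ⊆ {1,...,m} \ {i} and an assignment b : B → {0,1}, and let U = {1,...,m} \ (B ∪ {i}). For c ∈ {0,1} and u : U → {0,1}, let m_c(u) = Σ_{y : y_i=c, y|_B=b, y|_U=u} q(y), let N(c) = Σ_u m_c(u), and let E(c) = Σ_{y : y_i=c, y|_B=b} q(y)·S(y). Assume N(0) > 0, N(1) > 0, and the Markov blanket property: N(0)·m_1(u) = N(1)·m_0(u) for every u :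 U → {0,1}. Then (E(1)/N(1)) / (E(0)/N(0)) = f_i; i.e., P(X_j=0 | Y_i=1, Y_B=b) / P(X_j=0 | Y_i=0, Y_B=b) = f_i. -/
open Finset

/-- Markov-blanket estimator consistency: with a noisy-or observation,
`P(X=0 | Y_i=1, Y_B=b) / P(X=0 | Y_i=0, Y_B=b) = f i`. -/
theorem markov_blanket_estimator (m : ℕ) (q : (Fin m → Bool) → ℝ)
    (hq0 : ∀ y, 0 ≤ q y) (hq1 : ∑ y : Fin m → Bool, q y = 1)
    (l : ℝ) (hl0 : 0 ≤ l) (hl1 : l < 1)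
    (f : Fin m → ℝ) (hf : ∀ v, 0 < f v ∧ f v ≤ 1)
    (i : Fin m) (B : Finset (Fin m)) (hiB : i ∉ B) (b : Fin m → Bool)
    (N : Bool → ℝ)
    (hN : ∀ c, N c = ∑ y : Fin m → Bool,
        if y i = c ∧ ∀ j ∈ B, y j = b j then q y else 0)
    (E : Bool → ℝ)
    (hE : ∀ c, E c = ∑ y : Fin m → Bool,
        if y i = c ∧ ∀ j ∈ B, y j = b j then
          q y * ((1 - l) * ∏ v : Fin m, if y v then f v else 1) else 0)
    (hN0 : 0 < N false) (hN1 : 0 < N true)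
    (hMB : ∀ u : Fin m → Bool,
      N false * (∑ y : Fin m → Bool,
          if y i = true ∧ (∀ j ∈ B, y j = b j) ∧ ∀ j, j ≠ i → j ∉ B → y j = u j
          then q y else 0) =
        N true * (∑ y : Fin m → Bool,
          if y i = false ∧ (∀ j ∈ B, y j = b j) ∧ ∀ j, j ≠ i → j ∉ B → y j = u j
          then q y else 0)) :
    (E true / N true) / (E false / N false) = f i := by
  classical
  set T : (Fin m → Bool) → ℝ :=
    fun y => (1 - l) * ∏ v ∈ univ.erase i, (if y v then f v else 1) with hT
  have hsplit : ∀ y : Fin m → Bool,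
      (1 - l) * ∏ v : Fin m, (if y v then f v else 1)
        = (if y i then f i else 1) * T y := by
    intro y
    rw [hT]
    rw [← Finset.mul_prod_erase univ (fun v => if y v then f v else 1) (mem_univ i)]
    ring
  have hTupd : ∀ (y : Fin m → Bool) (c : Bool), T (Function.update y i c) = T y := by
    intro y c
    have hc : ∀ v ∈ univ.erase i,
        (if Function.update y i c v then f v else 1) = (if y v then f v else 1) := by
      intro v hv
      rw [Function.update_of_ne (Finset.ne_of_mem_erase hv)]
    simp only [hT]
    rw [Finset.prod_congr rfl hc]
  -- pointwise Markov blanket relation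
  have key : ∀ y : Fin m → Bool, y i = true → (∀ j ∈ B, y j = b j) →
      N false * q y = N true * q (Function.update y i false) := by
    intro y hyi hyB
    have h := hMB y
    have h1 : (∑ z : Fin m → Bool, if z i = true ∧ (∀ j ∈ B, z j = b j) ∧
        ∀ j, j ≠ i → j ∉ B → z j = y j then q z else 0) = q y := by
      rw [Fintype.sum_eq_single y]
      · rw [if_pos ⟨hyi, hyB, fun _ _ _ => rfl⟩]
      · intro z hz
        rw [if_neg]
        rintro ⟨e1, e2, e3⟩
        apply hz
        funext j
        by_cases hji : j = i
        · subst hji; rw [e1, hyi]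
        · by_cases hjB : j ∈ B
          · rw [e2 j hjB, hyB j hjB]
          · exact e3 j hji hjB
    have h2 : (∑ z : Fin m → Bool, if z i = false ∧ (∀ j ∈ B, z j = b j) ∧
        ∀ j, j ≠ i → j ∉ B → z j = y j then q z else 0)
        = q (Function.update y i false) := by
      rw [Fintype.sum_eq_single (Function.update y i false)]
      · rw [if_pos]
        refine ⟨Function.update_self _ _ _, ?_, ?_⟩
        · intro j hj
          have hji : j ≠ i := by rintro rfl; exact hiB hj
          rw [Function.update_of_ne hji, hyB j hj]
        · intro j hji _
          rw [Function.update_of_ne hji]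
      · intro z hz
        rw [if_neg]
        rintro ⟨e1, e2, e3⟩
        apply hz
        funext j
        by_cases hji : j = i
        · subst hji; rw [e1, Function.update_self]
        · rw [Function.update_of_ne hji]
          by_cases hjB : j ∈ B
          · rw [e2 j hjB, hyB j hjB]
          · exact e3 j hji hjB
    rw [h1, h2] at h
    exact h
  -- rewrite sums over filters
  have hEt : E true = f i * ∑ y ∈ univ.filter
      (fun y : Fin m → Bool => y i = true ∧ ∀ j ∈ B, y j = b j), q y * T y := by
    rw [hE true, Finset.mul_sum, ← Finset.sum_filter]
    apply Finset.sum_congr rfl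
    intro y hy
    rw [Finset.mem_filter] at hy
    rw [hsplit y, hy.2.1, if_pos rfl]
    ring
  have hEf : E false = ∑ y ∈ univ.filter
      (fun y : Fin m → Bool => y i = false ∧ ∀ j ∈ B, y j = b j), q y * T y := by
    rw [hE false, ← Finset.sum_filter]
    apply Finset.sum_congr rfl
    intro y hy
    rw [Finset.mem_filter] at hy
    rw [hsplit y, hy.2.1, if_neg (by simp)]
    ring
  -- bijection step
  have bij : (∑ y ∈ univ.filter
      (fun y : Fin m → Bool => y i = true ∧ ∀ j ∈ B, y j = b j),
        N false * (q y * T y))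
      = ∑ y ∈ univ.filter
      (fun y : Fin m → Bool => y i = false ∧ ∀ j ∈ B, y j = b j),
        N true * (q y * T y) := by
    apply Finset.sum_nbij' (fun y => Function.update y i false)
      (fun y => Function.update y i true)
    · intro y hy
      rw [Finset.mem_filter] at hy ⊢
      refine ⟨mem_univ _, Function.update_self _ _ _, ?_⟩
      intro j hj
      have hji : j ≠ i := by rintro rfl; exact hiB hj
      rw [Function.update_of_ne hji, hy.2.2 j hj]
    · intro y hy
      rw [Finset.mem_filter] at hy ⊢
      refine ⟨mem_univ _, Function.update_self _ _ _, ?_⟩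
      intro j hj
      have hji : j ≠ i := by rintro rfl; exact hiB hj
      rw [Function.update_of_ne hji, hy.2.2 j hj]
    · intro y hy
      rw [Finset.mem_filter] at hy
      funext j
      by_cases hji : j = i
      · subst hji; rw [Function.update_self, hy.2.1]
      · rw [Function.update_of_ne hji, Function.update_of_ne hji]
    · intro y hy
      rw [Finset.mem_filter] at hy
      funext j
      by_cases hji : j = i
      · subst hji; rw [Function.update_self, hy.2.1]
      · rw [Function.update_of_ne hji, Function.update_of_ne hji]
    · intro y hy
      rw [Finset.mem_filter] at hy
      rw [hTupd, ← mul_assoc, ← mul_assoc, key y hy.2.1 hy.2.2]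
      simp only [hT]
      ring
  -- the main identity
  have main : N false * E true = f i * (N true * E false) := by
    rw [hEt, hEf, mul_left_comm, Finset.mul_sum, bij, ← Finset.mul_sum]
  -- positivity of E false
  have hC : 0 < (1 - l) * ∏ v : Fin m, f v := by
    apply mul_pos (by linarith)
    exact Finset.prod_pos (fun v _ => (hf v).1)
  have hEfpos : 0 < E false := by
    have hle : ((1 - l) * ∏ v : Fin m, f v) * N false ≤ E false := by
      rw [hE false, hN false, Finset.mul_sum]
      apply Finset.sum_le_sum
      intro y _
      by_cases hy : y i = false ∧ ∀ j ∈ B, y j = b j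
      · rw [if_pos hy, if_pos hy]
        have hprod : (∏ v : Fin m, f v) ≤ ∏ v : Fin m, (if y v then f v else 1) := by
          apply Finset.prod_le_prod (fun v _ => (hf v).1.le)
          intro v _
          by_cases h : y v <;> simp [h, (hf v).2]
        have hmm := mul_le_mul_of_nonneg_left hprod
          (mul_nonneg (hq0 y) (by linarith : (0:ℝ) ≤ 1 - l))
        nlinarith [hmm]
      · rw [if_neg hy, if_neg hy, mul_zero]
    nlinarith
  have h1 : N true ≠ 0 := ne_of_gt hN1
  have h0 : N false ≠ 0 := ne_of_gt hN0
  have hEf0 : E false ≠ 0 := ne_of_gt hEfpos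
  field_simp
  linear_combination main
end

section
/- Consider a tree-structured latent model rooted at i with latent pmf q(y) = ρ(y_i)·Π_{v≠i} t_v(y_v, y_{par(v)}) and a noisy-or observation X with P(X=0 | Y=y) = S(y) = (1-l)·Π_v (f_v)^{[y_v]}. Fix c ∈ {0,1} with ρ(c) > 0. Then (Σ_{y : y_i=c} q(y)S(y)) / ρ(c) = (1-l)·(f_i)^{[c]}·Π_{k child of i} (Σ_{d ∈ {0,1}} t_k(d, c)·g_k(d)); i.e., P(X=0 | Y_i=c) factorizes over the subtrees rooted at the children of i. -/
open Finset

-- The subtree of node `k`: all nodes whose iterated parent reaches `k`.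
open Classical in
noncomputable def subtree (m : ℕ) (par : Fin m → Fin m) (k : Fin m) : Finset (Fin m) :=
  Finset.univ.filter fun v => ∃ n : ℕ, par^[n] v = k

/-- The subtree evidence function
`g_k(c) = Σ_{z : T(k) → {0,1}, z k = c} (Π_{v ∈ T(k), v ≠ k} t_v(z_v, z_{par v})) (Π_{v ∈ T(k)} f_v^{[z_v]})`,
where functions `z : T(k) → {0,1}` are encoded as `z : Fin m → Bool` forced to be
`false` outside the subtree. -/
noncomputable def gfun (m : ℕ) (par : Fin m → Fin m) (t : Fin m → Bool → Bool → ℝ)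
    (f : Fin m → ℝ) (k : Fin m) (c : Bool) : ℝ :=
  ∑ z : Fin m → Bool,
    if z k = c ∧ ∀ v, v ∉ subtree m par k → z v = false then
      (∏ v ∈ (subtree m par k).erase k, t v (z v) (z (par v))) *
        ∏ v ∈ subtree m par k, (if z v then f v else 1)
    else 0


open Finset

open Classical in
noncomputable def supp {σ : Type*} [Fintype σ] (s : Finset σ) : Finset (σ → Bool) :=
  Finset.univ.filter fun z => ∀ v, v ∉ s → z v = false

open Classical in
lemma mem_supp {σ : Type*} [Fintype σ] (s : Finset σ) (z : σ → Bool) :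
    z ∈ supp s ↔ ∀ v, v ∉ s → z v = false := by
  simp [supp]

lemma sum_supp_mul {σ : Type*} [Fintype σ] [DecidableEq σ] (s u : Finset σ) (hd : Disjoint s u)
    (F G : (σ → Bool) → ℝ)
    (hF : ∀ z z', (∀ v ∈ s, z v = z' v) → F z = F z')
    (hG : ∀ z z', (∀ v ∈ u, z v = z' v) → G z = G z') :
    (∑ z ∈ supp s, F z) * (∑ z ∈ supp u, G z) = ∑ z ∈ supp (s ∪ u), F z * G z := by
  classical
  rw [Finset.sum_mul_sum, ← Finset.sum_product']
  refine Finset.sum_nbij' (fun p => fun v => p.1 v || p.2 v)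
    (fun z => (fun v => if v ∈ s then z v else false, fun v => if v ∈ u then z v else false))
    ?_ ?_ ?_ ?_ ?_
  · rintro ⟨z1, z2⟩ hp
    rw [Finset.mem_product, mem_supp, mem_supp] at hp
    rw [mem_supp]
    intro v hv
    rw [Finset.mem_union] at hv
    push_neg at hv
    have h1 : z1 v = false := hp.1 v hv.1
    have h2 : z2 v = false := hp.2 v hv.2
    show (z1 v || z2 v) = false
    rw [h1, h2, Bool.or_self]
  · intro z hz
    rw [Finset.mem_product]
    constructor <;> · rw [mem_supp]; intro v hv; simp [hv]
  · rintro ⟨z1, z2⟩ hp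
    rw [Finset.mem_product, mem_supp, mem_supp] at hp
    simp only [Prod.mk.injEq]
    constructor
    · funext v
      by_cases hv : v ∈ s
      · have : z2 v = false := hp.2 v (Finset.disjoint_left.1 hd hv)
        simp [hv, this]
      · have h1 : z1 v = false := hp.1 v hv
        simp [hv, h1]
    · funext v
      by_cases hv : v ∈ u
      · have : z1 v = false := hp.1 v (Finset.disjoint_right.1 hd hv)
        simp [hv, this]
      · have h2 : z2 v = false := hp.2 v hv
        simp [hv, h2]
  · intro z hz
    rw [mem_supp] at hz
    funext v
    by_cases hs : v ∈ s
    · have hu : v ∉ u := Finset.disjoint_left.1 hd hs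
      simp [hs, hu]
    · by_cases hu : v ∈ u
      · simp [hs, hu]
      · have : z v = false := hz v (by simp [hs, hu])
        simp [hs, hu, this]
  · rintro ⟨z1, z2⟩ hp
    rw [Finset.mem_product, mem_supp, mem_supp] at hp
    have h1 : F z1 = F (fun v => z1 v || z2 v) := by
      apply hF
      intro v hv
      have : z2 v = false := hp.2 v (Finset.disjoint_left.1 hd hv)
      simp [this]
    have h2 : G z2 = G (fun v => z1 v || z2 v) := by
      apply hG
      intro v hv
      have : z1 v = false := hp.1 v (Finset.disjoint_right.1 hd hv)
      simp [this]
    rw [h1, h2]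

lemma supp_empty {σ : Type*} [Fintype σ] : supp (∅ : Finset σ) = {fun _ => false} := by
  ext z
  rw [mem_supp]
  simp [funext_iff]

lemma prod_sum_supp {σ ι : Type*} [Fintype σ] [DecidableEq σ] [DecidableEq ι] (B : Finset ι)
    (S : ι → Finset σ) (F : ι → (σ → Bool) → ℝ)
    (hd : ∀ j ∈ B, ∀ k ∈ B, j ≠ k → Disjoint (S j) (S k))
    (hdep : ∀ k ∈ B, ∀ z z', (∀ v ∈ S k, z v = z' v) → F k z = F k z') :
    ∏ k ∈ B, (∑ z ∈ supp (S k), F k z) = ∑ z ∈ supp (B.biUnion S), ∏ k ∈ B, F k z := by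
  classical
  induction B using Finset.induction_on with
  | empty => simp [supp_empty]
  | @insert k B hk ih =>
    rw [Finset.prod_insert hk, ih (fun j hj k2 hk2 j2 => hd j (Finset.mem_insert_of_mem hj) k2
        (Finset.mem_insert_of_mem hk2) j2)
        (fun j hj => hdep j (Finset.mem_insert_of_mem hj)),
      sum_supp_mul (S k) (B.biUnion S)
        (Finset.disjoint_biUnion_right _ _ _ |>.2 fun j hj =>
          hd k (Finset.mem_insert_self k B) j (Finset.mem_insert_of_mem hj)
            (fun h => hk (h ▸ hj)))
        _ _ (hdep k (Finset.mem_insert_self k B))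
        (fun z z' hzz => Finset.prod_congr rfl fun j hj =>
          hdep j (Finset.mem_insert_of_mem hj) z z' fun v hv =>
            hzz v (Finset.mem_biUnion.2 ⟨j, hj, hv⟩)),
      Finset.biUnion_insert]
    exact Finset.sum_congr rfl fun z hz => by rw [Finset.prod_insert hk]

lemma mem_subtree {m : ℕ} {par : Fin m → Fin m} (k v : Fin m) :
    v ∈ subtree m par k ↔ ∃ n, par^[n] v = k := by
  simp [subtree]

lemma root_not_mem {m : ℕ} {i : Fin m} {par : Fin m → Fin m} (hroot : par i = i)
    {k : Fin m} (hk : k ≠ i) : i ∉ subtree m par k := by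
  rw [mem_subtree]
  rintro ⟨n, hn⟩
  rw [Function.iterate_fixed hroot] at hn
  exact hk hn.symm

lemma par_mem_subtree {m : ℕ} {par : Fin m → Fin m} {k v : Fin m}
    (hv : v ∈ subtree m par k) (hvk : v ≠ k) : par v ∈ subtree m par k := by
  rw [mem_subtree] at *
  obtain ⟨n, hn⟩ := hv
  cases n with
  | zero => exact absurd hn hvk
  | succ n => exact ⟨n, by rwa [Function.iterate_succ_apply] at hn⟩

lemma iter_helper {m : ℕ} {i : Fin m} {par : Fin m → Fin m} (hroot : par i = i)
    {k k' v : Fin m} {n n' : ℕ} (h : n ≤ n') (hn : par^[n] v = k)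
    (hn' : par^[n'] v = k') (hk : par k = i) (hk' : k' ≠ i) : k = k' := by
  obtain ⟨d, rfl⟩ := Nat.exists_eq_add_of_le h
  rw [Nat.add_comm, Function.iterate_add_apply, hn] at hn'
  cases d with
  | zero => exact hn'
  | succ d =>
    rw [Function.iterate_succ_apply, hk, Function.iterate_fixed hroot] at hn'
    exact absurd hn'.symm hk'

lemma subtree_disjoint {m : ℕ} {i : Fin m} {par : Fin m → Fin m} (hroot : par i = i)
    {k k' : Fin m} (hk : par k = i) (hki : k ≠ i) (hk' : par k' = i) (hk'i : k' ≠ i)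
    (hkk' : k ≠ k') : Disjoint (subtree m par k) (subtree m par k') := by
  rw [Finset.disjoint_left]
  intro v hv hv'
  rw [mem_subtree] at hv hv'
  obtain ⟨n, hn⟩ := hv
  obtain ⟨n', hn'⟩ := hv'
  rcases le_total n n' with h | h
  · exact hkk' (iter_helper hroot h hn hn' hk hk'i)
  · exact hkk' (iter_helper hroot h hn' hn hk' hki).symm

lemma cover {m : ℕ} {i : Fin m} {par : Fin m → Fin m} (hroot : par i = i) :
    ∀ (n : ℕ) (v : Fin m), par^[n] v = i → v ≠ i →
      ∃ k, k ≠ i ∧ par k = i ∧ v ∈ subtree m par k := by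
  intro n
  induction n with
  | zero => intro v hv hvi; exact absurd hv hvi
  | succ n ih =>
    intro v hv hvi
    rw [Function.iterate_succ_apply] at hv
    by_cases hpv : par v = i
    · exact ⟨v, hvi, hpv, (mem_subtree _ _).2 ⟨0, rfl⟩⟩
    · obtain ⟨k, hk1, hk2, hk3⟩ := ih (par v) hv hpv
      rw [mem_subtree] at hk3
      obtain ⟨n0, hn0⟩ := hk3
      exact ⟨k, hk1, hk2, (mem_subtree _ _).2 ⟨n0 + 1, by rwa [Function.iterate_succ_apply]⟩⟩

lemma sum_gfun (m : ℕ) (par : Fin m → Fin m) (t : Fin m → Bool → Bool → ℝ) (f : Fin m → ℝ)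
    (k : Fin m) (c : Bool) :
    (∑ d : Bool, t k d c * gfun m par t f k d)
      = ∑ z ∈ supp (subtree m par k),
          t k (z k) c * ((∏ v ∈ (subtree m par k).erase k, t v (z v) (z (par v))) *
            ∏ v ∈ subtree m par k, (if z v then f v else 1)) := by
  classical
  have h : ∀ d : Bool, t k d c * gfun m par t f k d
      = ∑ z : Fin m → Bool,
          if z k = d ∧ ∀ v, v ∉ subtree m par k → z v = false then
            t k (z k) c * ((∏ v ∈ (subtree m par k).erase k, t v (z v) (z (par v))) *
              ∏ v ∈ subtree m par k, (if z v then f v else 1))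
          else 0 := by
    intro d
    rw [gfun, Finset.mul_sum]
    refine Finset.sum_congr rfl fun z _ => ?_
    by_cases hz : z k = d ∧ ∀ v, v ∉ subtree m par k → z v = false
    · rw [if_pos hz, if_pos hz, hz.1]
    · rw [if_neg hz, if_neg hz, mul_zero]
  rw [Fintype.sum_bool, h, h, ← Finset.sum_add_distrib]
  have hsupp : supp (subtree m par k)
      = Finset.univ.filter (fun z : Fin m → Bool => ∀ v, v ∉ subtree m par k → z v = false) := by
    ext z
    rw [mem_supp]
    simp
  rw [hsupp, Finset.sum_filter]
  refine Finset.sum_congr rfl fun z _ => ?_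
  by_cases hz : ∀ v, v ∉ subtree m par k → z v = false
  · cases hzk : z k <;> simp [hz, hzk]
  · simp [hz]

/-- In a tree-structured latent model rooted at `i`, the conditional
off-probability of a noisy-or observation given the root factorizes over the
subtrees of the children of the root. -/
theorem tree_conditional_factorization (m : ℕ) (i : Fin m) (par : Fin m → Fin m)
    (hroot : par i = i) (hne : ∀ v, v ≠ i → par v ≠ v)
    (hreach : ∀ v, ∃ n : ℕ, par^[n] v = i)
    (ρ : Bool → ℝ) (hρ0 : ∀ c, 0 ≤ ρ c) (hρ1 : ρ false + ρ true = 1)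
    (t : Fin m → Bool → Bool → ℝ)
    (ht0 : ∀ v, v ≠ i → ∀ a c, 0 ≤ t v a c)
    (ht1 : ∀ v, v ≠ i → ∀ c, t v false c + t v true c = 1)
    (l : ℝ) (hl0 : 0 ≤ l) (hl1 : l < 1)
    (f : Fin m → ℝ) (hf : ∀ v, 0 < f v ∧ f v ≤ 1)
    (c : Bool) (hc : 0 < ρ c) :
    (∑ y : Fin m → Bool, if y i = c then
        (ρ (y i) * ∏ v : Fin m, if v = i then 1 else t v (y v) (y (par v))) *
          ((1 - l) * ∏ v : Fin m, if y v then f v else 1)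
      else 0) / ρ c =
      (1 - l) * (if c then f i else 1) *
        ∏ k ∈ Finset.univ.filter (fun k : Fin m => k ≠ i ∧ par k = i),
          ∑ d : Bool, t k d c * gfun m par t f k d := by
  classical
  set C := Finset.univ.filter (fun k : Fin m => k ≠ i ∧ par k = i) with hC
  have hCmem : ∀ k ∈ C, k ≠ i ∧ par k = i := fun k hk => (Finset.mem_filter.1 hk).2
  set A := Finset.univ.erase i with hA
  have hdisj : ∀ j ∈ C, ∀ k ∈ C, j ≠ k → Disjoint (subtree m par j) (subtree m par k) := by
    intro j hj k hk hjk
    obtain ⟨hj1, hj2⟩ := hCmem j hj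
    obtain ⟨hk1, hk2⟩ := hCmem k hk
    exact subtree_disjoint hroot hj2 hj1 hk2 hk1 hjk
  have hdisj' : Set.PairwiseDisjoint (↑C) (subtree m par) := fun j hj k hk hjk =>
    hdisj j (Finset.mem_coe.1 hj) k (Finset.mem_coe.1 hk) hjk
  have hcover : C.biUnion (subtree m par) = A := by
    ext v
    simp only [Finset.mem_biUnion, hC, Finset.mem_filter, Finset.mem_univ, true_and, hA,
      Finset.mem_erase, and_true]
    constructor
    · rintro ⟨k, ⟨hk1, hk2⟩, hv⟩ rfl
      exact root_not_mem hroot hk1 hv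
    · intro hvi
      obtain ⟨n, hn⟩ := hreach v
      obtain ⟨k, h1, h2, h3⟩ := cover hroot n v hn hvi
      exact ⟨k, ⟨h1, h2⟩, h3⟩
  have hsub_ne : ∀ k ∈ C, ∀ v ∈ subtree m par k, v ≠ i := by
    intro k hk v hv hvi
    exact root_not_mem hroot (hCmem k hk).1 (hvi ▸ hv)
  set F : Fin m → (Fin m → Bool) → ℝ := fun k z =>
    t k (z k) c * ((∏ v ∈ (subtree m par k).erase k, t v (z v) (z (par v))) *
      ∏ v ∈ subtree m par k, (if z v then f v else 1)) with hF
  have hdep : ∀ k ∈ C, ∀ z z', (∀ v ∈ subtree m par k, z v = z' v) → F k z = F k z' := by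
    intro k hk z z' hzz
    simp only [hF]
    rw [hzz k ((mem_subtree _ _).2 ⟨0, rfl⟩)]
    congr 1
    congr 1
    · exact Finset.prod_congr rfl fun v hv => by
        rw [Finset.mem_erase] at hv
        rw [hzz v hv.2, hzz (par v) (par_mem_subtree hv.2 hv.1)]
    · exact Finset.prod_congr rfl fun v hv => by rw [hzz v hv]
  have hrhs : (∏ k ∈ C, ∑ d : Bool, t k d c * gfun m par t f k d)
      = ∑ z ∈ supp A, ∏ k ∈ C, F k z := by
    rw [← hcover, ← prod_sum_supp C _ F hdisj hdep]
    exact Finset.prod_congr rfl fun k _ => sum_gfun m par t f k c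
  have hbody : ∀ z : Fin m → Bool,
      ((ρ (Function.update z i c i) * ∏ v : Fin m, if v = i then 1 else
          t v (Function.update z i c v) (Function.update z i c (par v))) *
        ((1 - l) * ∏ v : Fin m, if Function.update z i c v then f v else 1))
      = ρ c * ((1 - l) * ((if c then f i else 1) * ∏ k ∈ C, F k z)) := by
    intro z
    have h1 : (∏ v : Fin m, if v = i then 1 else
          t v (Function.update z i c v) (Function.update z i c (par v)))
        = ∏ k ∈ C, (t k (z k) c *
            ∏ v ∈ (subtree m par k).erase k, t v (z v) (z (par v))) := by
      rw [← Finset.mul_prod_erase Finset.univ _ (Finset.mem_univ i), if_pos rfl, one_mul, ← hA]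
      have step1 : (∏ v ∈ A, if v = i then 1 else
            t v (Function.update z i c v) (Function.update z i c (par v)))
          = ∏ v ∈ A, t v (z v) (Function.update z i c (par v)) := by
        refine Finset.prod_congr rfl fun v hv => ?_
        have hvi : v ≠ i := (Finset.mem_erase.1 (hA ▸ hv)).1
        rw [if_neg hvi, Function.update_of_ne hvi]
      rw [step1, ← hcover, Finset.prod_biUnion hdisj']
      refine Finset.prod_congr rfl fun k hk => ?_
      have hkT : k ∈ subtree m par k := (mem_subtree _ _).2 ⟨0, rfl⟩
      rw [← Finset.mul_prod_erase _ _ hkT]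
      congr 1
      · rw [(hCmem k hk).2, Function.update_self]
      · refine Finset.prod_congr rfl fun v hv => ?_
        rw [Finset.mem_erase] at hv
        have hpvT : par v ∈ subtree m par k := par_mem_subtree hv.2 hv.1
        rw [Function.update_of_ne (hsub_ne k hk (par v) hpvT)]
    have h2 : (∏ v : Fin m, if Function.update z i c v then f v else 1)
        = (if c then f i else 1) *
            ∏ k ∈ C, ∏ v ∈ subtree m par k, (if z v then f v else 1) := by
      rw [← Finset.mul_prod_erase Finset.univ _ (Finset.mem_univ i), Function.update_self, ← hA]
      congr 1
      have step1 : (∏ v ∈ A, if Function.update z i c v then f v else 1)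
          = ∏ v ∈ A, (if z v then f v else 1) := by
        refine Finset.prod_congr rfl fun v hv => ?_
        have hvi : v ≠ i := (Finset.mem_erase.1 (hA ▸ hv)).1
        rw [Function.update_of_ne hvi]
      rw [step1, ← hcover, Finset.prod_biUnion hdisj']
    have h3 : (∏ k ∈ C, F k z)
        = (∏ k ∈ C, (t k (z k) c *
            ∏ v ∈ (subtree m par k).erase k, t v (z v) (z (par v)))) *
          ∏ k ∈ C, ∏ v ∈ subtree m par k, (if z v then f v else 1) := by
      rw [← Finset.prod_mul_distrib]
      exact Finset.prod_congr rfl fun k _ => by simp only [hF]; ring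
    rw [Function.update_self, h1, h2, h3]
    ring
  have hmem1 : ∀ y : Fin m → Bool, Function.update y i false ∈ supp A := by
    intro y
    rw [mem_supp]
    intro v hv
    have hvi : v = i := by
      by_contra h
      exact hv (by rw [hA]; exact Finset.mem_erase.2 ⟨h, Finset.mem_univ v⟩)
    subst hvi
    exact Function.update_self _ _ _
  have hinv : ∀ y : Fin m → Bool, y i = c →
      Function.update (Function.update y i false) i c = y := by
    intro y hy
    funext v
    by_cases hv : v = i
    · subst hv
      rw [Function.update_self]
      exact hy.symm
    · rw [Function.update_of_ne hv, Function.update_of_ne hv]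
  have hnum : (∑ y : Fin m → Bool, if y i = c then
        (ρ (y i) * ∏ v : Fin m, if v = i then 1 else t v (y v) (y (par v))) *
          ((1 - l) * ∏ v : Fin m, if y v then f v else 1)
      else 0)
      = ∑ z ∈ supp A, ρ c * ((1 - l) * ((if c then f i else 1) * ∏ k ∈ C, F k z)) := by
    rw [← Finset.sum_filter]
    refine Finset.sum_nbij' (fun y => Function.update y i false)
      (fun z => Function.update z i c) ?_ ?_ ?_ ?_ ?_
    · intro y _
      exact hmem1 y
    · intro z hz
      exact Finset.mem_filter.2 ⟨Finset.mem_univ _, Function.update_self _ _ _⟩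
    · intro y hy
      exact hinv y (Finset.mem_filter.1 hy).2
    · intro z hz
      rw [mem_supp] at hz
      funext v
      show Function.update (Function.update z i c) i false v = z v
      by_cases hv : v = i
      · subst hv
        rw [Function.update_self]
        exact (hz v (by rw [hA]; simp)).symm
      · rw [Function.update_of_ne hv, Function.update_of_ne hv]
    · intro y hy
      have h := hbody (Function.update y i false)
      rw [hinv y (Finset.mem_filter.1 hy).2] at h
      exact h
  rw [hnum, ← Finset.mul_sum, mul_comm (ρ c), mul_div_assoc, div_self hc.ne', mul_one,
    hrhs, ← Finset.mul_sum, ← Finset.mul_sum]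
  ring
end

section
/- Consider a tree-structured latent model rooted at i with latent pmf q(y) = ρ(y_i)·Π_{v≠i} t_v(y_v, y_{par(v)}) and a noisy-or observation X with P(X=0 | Y=y) = S(y) = (1-l)·Π_v (f_v)^{[y_v]}. Assume ρ(0) > 0, ρ(1) > 0, and t_k(d, 0) > 0 for every child k of i and every d ∈ {0,1}. For each child k of i define the correction factor c_k = (Σ_{d} P(Y_k=d | Y_i=1)·P(X=0 | Y_i=0, Y_k=d)) / P(X=0 | Y_i=0). Then f_i = (Π_{k child of i} c_k^{-1}) · (P(X=0 | Y_i=1) / P(X=0 | Y_i=0)); i.e., the failure probability of Y_i for X is exactly recovered by the serial correction estimator. -/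
/-!
Clamp the vertices outside a set `E` to a boundary assignment and sum
`∏_{v ∈ E} h_v(y_v, y_{par v})` over the free states. Once the root state `Y_i = c` is fixed, this
sum factorizes over the subtrees of the children `k` of `i`, since no edge joins two of them.
For the tilted kernels `h_v(a, b) = t_v(a, b) f_v^{[a]}` this gives
`∑_{y_i = c} q(y) S(y) = ρ(c) (1 - l) f_i^{[c]} ∏_k A_k(c)`, where `A_k(c)` is the sum over the
subtree of `k`. Pinning also `Y_k = d` replaces `A_k(c)` by `h_k(d, c) W_k(d)`, where `W_k(d)` is
the sum strictly below `k`, and for the stochastic kernels `t_v` all such sums are `1`, so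
`P(Y_k = d | Y_i = c) = t_k(d, c)`. Hence the `W_k(d)` recombine into `c_k = A_k(1) / A_k(0)`, and
`∏_k c_k⁻¹` cancels exactly the factor `∏_k A_k(1) / A_k(0)` of
`P(X = 0 | Y_i = 1) / P(X = 0 | Y_i = 0) = f_i ∏_k A_k(1) / A_k(0)`.
-/

open Finset

/-- The tree latent pmf `q(y) = ρ(y_i) ∏_{v ≠ i} t_v(y_v, y_{par v})`. -/
noncomputable def qfun (m : ℕ) (i : Fin m) (par : Fin m → Fin m) (ρ : Bool → ℝ)
    (t : Fin m → Bool → Bool → ℝ) (y : Fin m → Bool) : ℝ :=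
  ρ (y i) * ∏ v : Fin m, if v = i then 1 else t v (y v) (y (par v))

/-- The noisy-or off-probability `S(y) = (1-l) ∏_v f_v^{[y_v]}`. -/
noncomputable def Sfun (m : ℕ) (l : ℝ) (f : Fin m → ℝ) (y : Fin m → Bool) : ℝ :=
  (1 - l) * ∏ v : Fin m, if y v then f v else 1

namespace TreeModel

section ForestSum

variable {α β : Type*} [Fintype α] [DecidableEq α] [Fintype β] [DecidableEq β]

def pinned (E : Finset α) (σ : α → β) : Finset (α → β) :=
  univ.filter fun y => ∀ v ∉ E, y v = σ v

@[simp]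
lemma mem_pinned {E : Finset α} {σ y : α → β} : y ∈ pinned E σ ↔ ∀ v ∉ E, y v = σ v := by
  simp [pinned]

lemma pinned_empty (σ : α → β) : pinned ∅ σ = {σ} := by
  ext y
  simp [funext_iff]

lemma filter_pinned_eq_pinned_erase {E : Finset α} {u : α} (hu : u ∈ E) (σ : α → β) (b : β) :
    (pinned E σ).filter (· u = b) = pinned (E.erase u) (Function.update σ u b) := by
  ext y
  simp only [mem_filter, mem_pinned, mem_erase, not_and_or, not_not]
  constructor
  · rintro ⟨hy, rfl⟩ v (rfl | hv)
    · simp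
    · by_cases hvu : v = u
      · subst hvu; simp
      · rw [Function.update_of_ne hvu, hy v hv]
  · intro hy
    refine ⟨fun v hv => ?_, by simpa using hy u (.inl rfl)⟩
    have hvu : v ≠ u := by rintro rfl; exact hv hu
    rw [hy v (.inr hv), Function.update_of_ne hvu]

lemma sum_ite_apply_eq_sum_pinned {M : Type*} [AddCommMonoid M] (F : (α → β) → M) (i : α)
    (c : β) :
    ∑ y, (if y i = c then F y else 0) = ∑ y ∈ pinned (univ.erase i) (fun _ => c), F y := by
  rw [← sum_filter]
  congr 1
  ext y
  simp

lemma sum_ite_apply₂_eq_sum_pinned {M : Type*} [AddCommMonoid M] (F : (α → β) → M) {i k : α}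
    (hk : k ≠ i) (c d : β) :
    ∑ y, (if y i = c ∧ y k = d then F y else 0)
      = ∑ y ∈ pinned ((univ.erase i).erase k) (Function.update (fun _ => c) k d), F y := by
  rw [← sum_filter]
  congr 1
  ext y
  simp only [mem_filter, mem_univ, true_and, mem_pinned, mem_erase, and_true, not_and_or,
    not_not]
  constructor
  · rintro ⟨rfl, rfl⟩ v (rfl | rfl)
    · simp
    · simp [Function.update_of_ne hk.symm]
  · intro hy
    exact ⟨by simpa [hk.symm] using hy i (.inr rfl), by simpa using hy k (.inl rfl)⟩

lemma piecewise_eq_of_mem_pinned {E F : Finset α} {σ y : α → β} (hy : y ∈ pinned E σ) {w : α}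
    (hw : w ∈ E → w ∈ F) : F.piecewise y σ w = y w := by
  by_cases hwF : w ∈ F
  · exact piecewise_eq_of_mem _ _ _ hwF
  · rw [piecewise_eq_of_notMem _ _ _ hwF, mem_pinned.mp hy w (mt hw hwF)]

variable {R : Type*} [CommSemiring R] (par : α → α) (h : α → β → β → R)

def forestSum (E : Finset α) (σ : α → β) : R :=
  ∑ y ∈ pinned E σ, ∏ v ∈ E, h v (y v) (y (par v))

lemma forestSum_empty (σ : α → β) : forestSum par h ∅ σ = 1 := by
  simp [forestSum, pinned_empty]

lemma forestSum_congr {E : Finset α} {σ σ' : α → β}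
    (hσ : ∀ v ∈ E, par v ∉ E → σ (par v) = σ' (par v)) :
    forestSum par h E σ = forestSum par h E σ' := by
  refine sum_nbij' (E.piecewise · σ') (E.piecewise · σ) ?_ ?_ ?_ ?_ ?_
  · intro y _
    simp +contextual [piecewise_eq_of_notMem]
  · intro y _
    simp +contextual [piecewise_eq_of_notMem]
  · intro y hy
    ext v
    by_cases hv : v ∈ E <;> simp_all [piecewise_eq_of_notMem]
  · intro y hy
    ext v
    by_cases hv : v ∈ E <;> simp_all [piecewise_eq_of_notMem]
  · intro y hy
    refine prod_congr rfl fun v hv => ?_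
    by_cases hpv : par v ∈ E
    · simp [hv, hpv]
    · rw [piecewise_eq_of_mem _ _ _ hv, piecewise_eq_of_notMem _ _ _ hpv,
        (mem_pinned.mp hy) _ hpv, hσ v hv hpv]

lemma sum_pinned_erase_prod {E : Finset α} {u : α} (hu : u ∈ E) (hpu : par u ∉ E)
    (σ : α → β) :
    ∑ y ∈ pinned (E.erase u) σ, ∏ v ∈ E, h v (y v) (y (par v))
      = h u (σ u) (σ (par u)) * forestSum par h (E.erase u) σ := by
  rw [forestSum, mul_sum]
  refine sum_congr rfl fun y hy => ?_
  have hy := mem_pinned.mp hy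
  rw [← mul_prod_erase E _ hu, hy u (notMem_erase u E),
    hy (par u) fun h => hpu (mem_of_mem_erase h)]

lemma forestSum_eq_sum_erase {E : Finset α} {u : α} (hu : u ∈ E) (hpu : par u ∉ E)
    (σ : α → β) :
    forestSum par h E σ
      = ∑ b, h u b (σ (par u)) * forestSum par h (E.erase u) (Function.update σ u b) := by
  have hpuu : par u ≠ u := fun h => hpu (by rwa [h])
  rw [forestSum, ← sum_fiberwise (pinned E σ) (· u)]
  refine sum_congr rfl fun b _ => ?_
  rw [filter_pinned_eq_pinned_erase hu, sum_pinned_erase_prod par h hu hpu,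
    Function.update_self, Function.update_of_ne hpuu]

lemma forestSum_union {E₁ E₂ : Finset α} (hdisj : Disjoint E₁ E₂)
    (h₁₂ : ∀ v ∈ E₁, par v ∉ E₂) (h₂₁ : ∀ v ∈ E₂, par v ∉ E₁) (σ : α → β) :
    forestSum par h (E₁ ∪ E₂) σ = forestSum par h E₁ σ * forestSum par h E₂ σ := by
  rw [forestSum, forestSum, forestSum, sum_mul_sum, ← sum_product']
  refine sum_nbij' (fun y => (E₁.piecewise y σ, E₂.piecewise y σ))
    (fun p => E₁.piecewise p.1 p.2) ?_ ?_ ?_ ?_ ?_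
  · intro y _
    simp +contextual [piecewise_eq_of_notMem]
  · rintro ⟨y₁, y₂⟩ hp
    simp only [mem_product, mem_pinned] at hp ⊢
    intro v hv
    rw [mem_union, not_or] at hv
    rw [piecewise_eq_of_notMem _ _ _ hv.1, hp.2 v hv.2]
  · intro y hy
    ext v
    by_cases hv₁ : v ∈ E₁
    · simp [hv₁]
    by_cases hv₂ : v ∈ E₂
    · simp [hv₁, hv₂]
    · simp_all [piecewise_eq_of_notMem]
  · rintro ⟨y₁, y₂⟩ hp
    simp only [mem_product, mem_pinned] at hp
    ext v
    · by_cases hv₁ : v ∈ E₁ <;> simp_all [piecewise_eq_of_notMem]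
    · by_cases hv₂ : v ∈ E₂
      · simp [hv₂, disjoint_right.mp hdisj hv₂]
      · simp_all [piecewise_eq_of_notMem]
  · intro y hy
    have agree₁ : ∀ w ∉ E₂, E₁.piecewise y σ w = y w := fun w hw =>
      piecewise_eq_of_mem_pinned hy fun hw' => (mem_union.mp hw').resolve_right hw
    have agree₂ : ∀ w ∉ E₁, E₂.piecewise y σ w = y w := fun w hw =>
      piecewise_eq_of_mem_pinned hy fun hw' => (mem_union.mp hw').resolve_left hw
    rw [prod_union hdisj]
    congr 1 <;> refine prod_congr rfl fun v hv => ?_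
    · dsimp only
      rw [agree₁ v (disjoint_left.mp hdisj hv), agree₁ _ (h₁₂ v hv)]
    · dsimp only
      rw [agree₂ v (disjoint_right.mp hdisj hv), agree₂ _ (h₂₁ v hv)]

lemma forestSum_eq_prod_filter {κ : Type*} [DecidableEq κ] (lab : α → κ) (s : Finset κ)
    {E : Finset α} (hs : ∀ v ∈ E, lab v ∈ s) (hlab : ∀ v ∈ E, par v ∈ E → lab (par v) = lab v)
    (σ : α → β) :
    forestSum par h E σ = ∏ j ∈ s, forestSum par h (E.filter (lab · = j)) σ := by
  induction s using Finset.induction_on generalizing E with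
  | empty =>
    rw [eq_empty_of_forall_notMem fun v hv => notMem_empty _ (hs v hv), forestSum_empty,
      prod_empty]
  | insert a s ha ih =>
    have hsplit := forestSum_union par h (disjoint_filter_filter_not E E (lab · = a))
      (fun v hv hpv => by
        simp only [mem_filter] at hv hpv; exact hpv.2 ((hlab v hv.1 hpv.1).trans hv.2))
      (fun v hv hpv => by
        simp only [mem_filter] at hv hpv; exact hv.2 ((hlab v hv.1 hpv.1).symm.trans hpv.2)) σ
    rw [filter_union_filter_not_eq] at hsplit
    rw [hsplit, prod_insert ha,
      ih (fun v hv => (mem_insert.mp (hs v (mem_filter.mp hv).1)).resolve_left (mem_filter.mp hv).2)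
        (fun v hv hpv => hlab v (mem_filter.mp hv).1 (mem_filter.mp hpv).1)]
    refine congrArg _ (prod_congr rfl fun j hj => ?_)
    rw [filter_filter,
      filter_congr fun v _ => and_iff_right_of_imp (by rintro rfl rfl; exact ha hj)]

lemma forestSum_eq_one (dep : α → ℕ) {E : Finset α} (hdep : ∀ v ∈ E, dep (par v) < dep v)
    (hnorm : ∀ v ∈ E, ∀ c, ∑ b, h v b c = 1) (σ : α → β) : forestSum par h E σ = 1 := by
  induction E using Finset.strongInduction generalizing σ with
  | _ E ih =>
  obtain rfl | hE := E.eq_empty_or_nonempty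
  · exact forestSum_empty par h σ
  obtain ⟨u, hu, hmin⟩ := E.exists_min_image dep hE
  have hpu : par u ∉ E := fun hpu => (hdep u hu).not_ge (hmin _ hpu)
  have ih' : ∀ σ', forestSum par h (E.erase u) σ' = 1 := ih _ (erase_ssubset hu)
    (fun v hv => hdep v (mem_of_mem_erase hv)) (fun v hv => hnorm v (mem_of_mem_erase hv))
  simp only [forestSum_eq_sum_erase par h hu hpu, ih', mul_one, hnorm u hu]

def tilt (t : α → β → β → R) (w : α → β → R) : α → β → β → R := fun v a c => t v a c * w v a

lemma forestSum_tilt_pos [LinearOrder R] [IsStrictOrderedRing R] {t : α → β → β → R}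
    {w : α → β → R} {E : Finset α} {σ : α → β}
    (ht : ∀ v ∈ E, ∀ a c, 0 ≤ t v a c) (hw : ∀ v ∈ E, ∀ a, 0 < w v a)
    (hpos : 0 < forestSum par t E σ) : 0 < forestSum par (tilt t w) E σ := by
  obtain ⟨y, hy, hty⟩ :=
    exists_lt_of_sum_lt (f := fun _ => (0 : R)) (by simpa [forestSum] using hpos)
  refine sum_pos' (fun y _ => prod_nonneg fun v hv => mul_nonneg (ht v hv _ _) (hw v hv _).le)
    ⟨y, hy, ?_⟩
  simp only [tilt, prod_mul_distrib]
  exact mul_pos hty (prod_pos fun v hv => hw v hv _)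

end ForestSum

section RootedTree

variable {α : Type*} {par : α → α} {i : α}

/-- Junk value `0` when `i` is never reached from `v`. -/
noncomputable def depth (par : α → α) (i v : α) : ℕ := sInf {n | par^[n] v = i}

/-- The ancestor of `v ≠ i` whose parent is the root `i`. -/
noncomputable def rootChild (par : α → α) (i v : α) : α := par^[depth par i v - 1] v

lemma iterate_depth (hreach : ∀ v, ∃ n, par^[n] v = i) (v : α) : par^[depth par i v] v = i :=
  Nat.sInf_mem (hreach v)

lemma depth_le {v : α} {n : ℕ} (h : par^[n] v = i) : depth par i v ≤ n :=
  Nat.sInf_le h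

lemma depth_par (hreach : ∀ v, ∃ n, par^[n] v = i) {v : α} (hv : v ≠ i) :
    depth par i (par v) + 1 = depth par i v := by
  have hpos : depth par i v ≠ 0 := fun h0 => hv (by simpa [h0] using iterate_depth hreach v)
  refine le_antisymm ?_ (depth_le (by rw [Function.iterate_succ_apply, iterate_depth hreach]))
  have : par^[depth par i v - 1] (par v) = i := by
    rw [← Function.iterate_succ_apply, Nat.succ_eq_add_one, Nat.sub_add_cancel (by omega),
      iterate_depth hreach]
  have := depth_le this
  omega

lemma par_rootChild (hreach : ∀ v, ∃ n, par^[n] v = i) {v : α} (hv : v ≠ i) :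
    par (rootChild par i v) = i := by
  have := depth_par hreach hv
  rw [rootChild, ← Function.iterate_succ_apply' par, Nat.succ_eq_add_one,
    Nat.sub_add_cancel (by omega), iterate_depth hreach]

lemma rootChild_par (hreach : ∀ v, ∃ n, par^[n] v = i) {v : α} (hv : v ≠ i) (hpv : par v ≠ i) :
    rootChild par i (par v) = rootChild par i v := by
  have := depth_par hreach hv
  have := depth_par hreach hpv
  rw [rootChild, rootChild, ← Function.iterate_succ_apply]
  congr 1
  omega

variable [Fintype α] [DecidableEq α]

def children (par : α → α) (i : α) : Finset α := univ.filter fun k => k ≠ i ∧ par k = i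

noncomputable def subtree (par : α → α) (i k : α) : Finset α :=
  (univ.erase i).filter (rootChild par i · = k)

lemma mem_children {k : α} : k ∈ children par i ↔ k ≠ i ∧ par k = i := by
  simp [children]

lemma mem_subtree {k v : α} : v ∈ subtree par i k ↔ v ≠ i ∧ rootChild par i v = k := by
  simp [subtree]

lemma root_notMem_subtree (k : α) : i ∉ subtree par i k := fun h => (mem_subtree.mp h).1 rfl

lemma rootChild_mem_children (hreach : ∀ v, ∃ n, par^[n] v = i) {v : α} (hv : v ≠ i) :
    rootChild par i v ∈ children par i := by
  refine mem_children.mpr ⟨fun h => ?_, par_rootChild hreach hv⟩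
  have := depth_le h
  have := depth_par hreach hv
  omega

lemma rootChild_of_mem_children (hreach : ∀ v, ∃ n, par^[n] v = i) {k : α}
    (hk : k ∈ children par i) : rootChild par i k = k := by
  obtain ⟨hki, hpk⟩ := mem_children.mp hk
  have := depth_par hreach hki
  rw [hpk, Nat.eq_zero_of_le_zero (depth_le (Function.iterate_zero_apply par i))] at this
  rw [rootChild, ← this]
  rfl

lemma mem_subtree_self (hreach : ∀ v, ∃ n, par^[n] v = i) {k : α} (hk : k ∈ children par i) :
    k ∈ subtree par i k :=
  mem_subtree.mpr ⟨(mem_children.mp hk).1, rootChild_of_mem_children hreach hk⟩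

lemma par_mem_subtree (hreach : ∀ v, ∃ n, par^[n] v = i) {k v : α} (hv : v ∈ subtree par i k)
    (hpv : par v ≠ i) : par v ∈ subtree par i k := by
  obtain ⟨hvi, hvk⟩ := mem_subtree.mp hv
  exact mem_subtree.mpr ⟨hpv, (rootChild_par hreach hvi hpv).trans hvk⟩

lemma par_eq_of_mem_subtree_erase (hreach : ∀ v, ∃ n, par^[n] v = i) {k v : α}
    (hv : v ∈ (subtree par i k).erase k) (hpv : par v ∉ (subtree par i k).erase k) :
    par v = k := by
  obtain ⟨hvk, hv⟩ := mem_erase.mp hv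
  by_cases hpvi : par v = i
  · obtain ⟨hvi, hrv⟩ := mem_subtree.mp hv
    rw [rootChild_of_mem_children hreach (mem_children.mpr ⟨hvi, hpvi⟩)] at hrv
    exact absurd hrv hvk
  · by_contra hpvk
    exact hpv (mem_erase.mpr ⟨hpvk, par_mem_subtree hreach hv hpvi⟩)

end RootedTree

section TreeForestSum

variable {α β R : Type*} [Fintype α] [DecidableEq α] [Fintype β] [DecidableEq β] [CommSemiring R]
  {par : α → α} {i : α} (h : α → β → β → R)

lemma forestSum_erase_root (hreach : ∀ v, ∃ n, par^[n] v = i) (σ : α → β) :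
    forestSum par h (univ.erase i) σ
      = ∏ k ∈ children par i, forestSum par h (subtree par i k) σ :=
  forestSum_eq_prod_filter par h (rootChild par i) _
    (fun _ hv => rootChild_mem_children hreach (ne_of_mem_erase hv))
    (fun _ hv hpv => rootChild_par hreach (ne_of_mem_erase hv) (ne_of_mem_erase hpv)) σ

lemma forestSum_erase_root_child (hreach : ∀ v, ∃ n, par^[n] v = i) {k : α}
    (hk : k ∈ children par i) (σ : α → β) :
    forestSum par h ((univ.erase i).erase k) σ
      = forestSum par h ((subtree par i k).erase k) σ
        * ∏ k' ∈ (children par i).erase k, forestSum par h (subtree par i k') σ := by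
  have hne : ∀ {v}, v ∈ (univ.erase i).erase k → v ≠ i := fun hv =>
    ne_of_mem_erase (mem_of_mem_erase hv)
  rw [forestSum_eq_prod_filter par h (rootChild par i) (children par i)
      (fun _ hv => rootChild_mem_children hreach (hne hv))
      (fun _ hv hpv => rootChild_par hreach (hne hv) (hne hpv)),
    ← mul_prod_erase _ _ hk]
  simp only [filter_erase _ k]
  congr 1
  refine prod_congr rfl fun k' hk' => congrArg (forestSum par h · σ) (erase_eq_of_notMem ?_)
  intro hkk'
  rw [← (mem_subtree.mp hkk').2, rootChild_of_mem_children hreach hk] at hk'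
  exact notMem_erase k _ hk'

lemma forestSum_subtree_congr (hreach : ∀ v, ∃ n, par^[n] v = i) {k : α} {σ σ' : α → β}
    (hσ : σ i = σ' i) :
    forestSum par h (subtree par i k) σ = forestSum par h (subtree par i k) σ' :=
  forestSum_congr par h fun v hv hpv => by
    rwa [of_not_not fun hpvi => hpv (par_mem_subtree hreach hv hpvi)]

lemma forestSum_subtree_erase_congr (hreach : ∀ v, ∃ n, par^[n] v = i) {k : α}
    {σ σ' : α → β} (hσ : σ k = σ' k) :
    forestSum par h ((subtree par i k).erase k) σ
      = forestSum par h ((subtree par i k).erase k) σ' :=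
  forestSum_congr par h fun v hv hpv => by rwa [par_eq_of_mem_subtree_erase hreach hv hpv]

lemma forestSum_subtree (hreach : ∀ v, ∃ n, par^[n] v = i) {k : α} (hk : k ∈ children par i)
    (σ : α → β) :
    forestSum par h (subtree par i k) σ
      = ∑ d, h k d (σ i) * forestSum par h ((subtree par i k).erase k) (fun _ => d) := by
  have hpk := (mem_children.mp hk).2
  rw [forestSum_eq_sum_erase par h (mem_subtree_self hreach hk) (hpk ▸ root_notMem_subtree k),
    hpk]
  refine sum_congr rfl fun d _ => ?_
  rw [forestSum_subtree_erase_congr h hreach (σ' := fun _ => d) (Function.update_self ..)]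

lemma forestSum_eq_one_of_root_notMem (hreach : ∀ v, ∃ n, par^[n] v = i) {E : Finset α}
    (hi : i ∉ E) (hnorm : ∀ v, v ≠ i → ∀ c, ∑ b, h v b c = 1) (σ : α → β) :
    forestSum par h E σ = 1 :=
  forestSum_eq_one par h (depth par i)
    (fun v hv => by have := depth_par hreach (ne_of_mem_of_not_mem hv hi); omega)
    (fun v hv => hnorm v (ne_of_mem_of_not_mem hv hi)) σ

end TreeForestSum

section NoisyOr

variable {m : ℕ} {i : Fin m} {par : Fin m → Fin m} (ρ : Bool → ℝ) (t : Fin m → Bool → Bool → ℝ)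
  (l : ℝ) (f : Fin m → ℝ)

def noisyOrWeight (v : Fin m) (a : Bool) : ℝ := if a then f v else 1

@[simp]
lemma noisyOrWeight_true (v : Fin m) : noisyOrWeight f v true = f v := rfl

@[simp]
lemma noisyOrWeight_false (v : Fin m) : noisyOrWeight f v false = 1 := rfl

lemma qfun_eq_of_apply_eq {y : Fin m → Bool} {c : Bool} (hy : y i = c) :
    qfun m i par ρ t y = ρ c * ∏ v ∈ univ.erase i, t v (y v) (y (par v)) := by
  rw [qfun, hy, ← mul_prod_erase univ _ (mem_univ i), if_pos rfl, one_mul]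
  exact congrArg _ (prod_congr rfl fun v hv => if_neg (ne_of_mem_erase hv))

lemma qfun_mul_Sfun_eq_of_apply_eq {y : Fin m → Bool} {c : Bool} (hy : y i = c) :
    qfun m i par ρ t y * Sfun m l f y
      = ρ c * (1 - l) * noisyOrWeight f i c
        * ∏ v ∈ univ.erase i, tilt t (noisyOrWeight f) v (y v) (y (par v)) := by
  rw [qfun_eq_of_apply_eq ρ t hy, Sfun, ← mul_prod_erase univ _ (mem_univ i), hy]
  simp only [tilt, noisyOrWeight, prod_mul_distrib]
  ring

lemma sum_qfun_mul_Sfun_root (hreach : ∀ v, ∃ n, par^[n] v = i) (c : Bool) :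
    ∑ y, (if y i = c then qfun m i par ρ t y * Sfun m l f y else 0)
      = ρ c * (1 - l) * noisyOrWeight f i c
        * ∏ k ∈ children par i,
            forestSum par (tilt t (noisyOrWeight f)) (subtree par i k) (fun _ => c) := by
  rw [sum_ite_apply_eq_sum_pinned, ← forestSum_erase_root _ hreach, forestSum, mul_sum]
  exact sum_congr rfl fun y hy =>
    qfun_mul_Sfun_eq_of_apply_eq ρ t l f (mem_pinned.mp hy i (notMem_erase i _))

lemma sum_qfun_root_child (hreach : ∀ v, ∃ n, par^[n] v = i)
    (ht₁ : ∀ v, v ≠ i → ∀ c, t v false c + t v true c = 1) {k : Fin m}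
    (hk : k ∈ children par i) (c d : Bool) :
    ∑ y, (if y i = c ∧ y k = d then qfun m i par ρ t y else 0) = ρ c * t k d c := by
  obtain ⟨hki, hpk⟩ := mem_children.mp hk
  have hk' : k ∈ univ.erase i := mem_erase.mpr ⟨hki, mem_univ k⟩
  rw [sum_ite_apply₂_eq_sum_pinned _ hki, sum_congr rfl fun y hy => qfun_eq_of_apply_eq ρ t
      (c := c) (by simpa [hki.symm] using mem_pinned.mp hy i (by simp)),
    ← mul_sum, sum_pinned_erase_prod par t hk' (by simp [hpk]),
    forestSum_eq_one_of_root_notMem t hreach (by simp)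
      (fun v hv c => by rw [Fintype.sum_bool, add_comm, ht₁ v hv])]
  simp [hpk, hki.symm]

lemma sum_qfun_mul_Sfun_root_child (hreach : ∀ v, ∃ n, par^[n] v = i) {k : Fin m}
    (hk : k ∈ children par i) (c d : Bool) :
    ∑ y, (if y i = c ∧ y k = d then qfun m i par ρ t y * Sfun m l f y else 0)
      = ρ c * (1 - l) * noisyOrWeight f i c
        * (tilt t (noisyOrWeight f) k d c
          * forestSum par (tilt t (noisyOrWeight f)) ((subtree par i k).erase k) (fun _ => d)
          * ∏ k' ∈ (children par i).erase k,
              forestSum par (tilt t (noisyOrWeight f)) (subtree par i k') (fun _ => c)) := by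
  obtain ⟨hki, hpk⟩ := mem_children.mp hk
  have hk' : k ∈ univ.erase i := mem_erase.mpr ⟨hki, mem_univ k⟩
  rw [sum_ite_apply₂_eq_sum_pinned _ hki, sum_congr rfl fun y hy =>
      qfun_mul_Sfun_eq_of_apply_eq ρ t l f (c := c)
        (by simpa [hki.symm] using mem_pinned.mp hy i (by simp)),
    ← mul_sum, sum_pinned_erase_prod par _ hk' (by simp [hpk]),
    forestSum_erase_root_child _ hreach hk,
    forestSum_subtree_erase_congr _ hreach (σ' := fun _ => d) (by simp)]
  simp only [Function.update_self, hpk, Function.update_of_ne hki.symm, mul_assoc]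
  congr 5
  exact prod_congr rfl fun k' _ => forestSum_subtree_congr _ hreach (by simp [hki.symm])

lemma forestSum_noisyOr_pos (hreach : ∀ v, ∃ n, par^[n] v = i)
    (ht₀ : ∀ v, v ≠ i → ∀ a c, 0 ≤ t v a c)
    (ht₁ : ∀ v, v ≠ i → ∀ c, t v false c + t v true c = 1) (hf : ∀ v, 0 < f v)
    {E : Finset (Fin m)} (hi : i ∉ E) (σ : Fin m → Bool) :
    0 < forestSum par (tilt t (noisyOrWeight f)) E σ := by
  refine forestSum_tilt_pos par (fun v hv => ht₀ v (ne_of_mem_of_not_mem hv hi))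
    (fun v _ a => by cases a <;> simp [hf v]) ?_
  rw [forestSum_eq_one_of_root_notMem t hreach hi
    fun v hv c => by rw [Fintype.sum_bool, add_comm, ht₁ v hv]]
  exact one_pos

lemma correctionFactor_eq (hreach : ∀ v, ∃ n, par^[n] v = i)
    (ht₀ : ∀ v, v ≠ i → ∀ a c, 0 ≤ t v a c)
    (ht₁ : ∀ v, v ≠ i → ∀ c, t v false c + t v true c = 1) (hl : l ≠ 1) (hf : ∀ v, 0 < f v)
    (hρf : ρ false ≠ 0) (hρt : ρ true ≠ 0) {k : Fin m} (hk : k ∈ children par i)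
    (htk : ∀ d, t k d false ≠ 0) :
    (∑ d : Bool,
        ((∑ y : Fin m → Bool, if y i = true ∧ y k = d then qfun m i par ρ t y else 0) / ρ true) *
          ((∑ y : Fin m → Bool,
              if y i = false ∧ y k = d then qfun m i par ρ t y * Sfun m l f y else 0) /
            (∑ y : Fin m → Bool, if y i = false ∧ y k = d then qfun m i par ρ t y else 0))) /
      ((∑ y : Fin m → Bool, if y i = false then qfun m i par ρ t y * Sfun m l f y else 0) /
        ρ false)
      = forestSum par (tilt t (noisyOrWeight f)) (subtree par i k) (fun _ => true)
        / forestSum par (tilt t (noisyOrWeight f)) (subtree par i k) (fun _ => false) := by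
  simp only [sum_qfun_root_child ρ t hreach ht₁ hk,
    sum_qfun_mul_Sfun_root_child ρ t l f hreach hk, sum_qfun_mul_Sfun_root ρ t l f hreach,
    ← mul_prod_erase _ _ hk]
  set h := tilt t (noisyOrWeight f)
  set P := ∏ k' ∈ (children par i).erase k, forestSum par h (subtree par i k') (fun _ => false)
  have hP : 0 < P := prod_pos fun k' _ =>
    forestSum_noisyOr_pos t f hreach ht₀ ht₁ hf (root_notMem_subtree k') _
  have hA : 0 < forestSum par h (subtree par i k) (fun _ => false) :=
    forestSum_noisyOr_pos t f hreach ht₀ ht₁ hf (root_notMem_subtree k) _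
  have hl' : 1 - l ≠ 0 := sub_ne_zero.mpr hl.symm
  have hterm : ∀ d, ρ true * t k d true / ρ true
        * (ρ false * (1 - l) * noisyOrWeight f i false
          * (h k d false * forestSum par h ((subtree par i k).erase k) (fun _ => d) * P)
          / (ρ false * t k d false))
      = (1 - l) * P * (h k d true * forestSum par h ((subtree par i k).erase k) (fun _ => d)) := by
    intro d
    have := htk d
    simp only [h, tilt, noisyOrWeight_false, mul_one]
    field_simp
  rw [sum_congr rfl fun d _ => hterm d, ← mul_sum,
    ← forestSum_subtree _ hreach hk (fun _ => true)]
  simp only [noisyOrWeight_false, mul_one]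
  field_simp

end NoisyOr

end TreeModel

open TreeModel

theorem serial_correction_estimator_general (m : ℕ) (i : Fin m) (par : Fin m → Fin m)
    (hreach : ∀ v, ∃ n : ℕ, par^[n] v = i)
    (ρ : Bool → ℝ)
    (t : Fin m → Bool → Bool → ℝ)
    (ht0 : ∀ v, v ≠ i → ∀ a c, 0 ≤ t v a c)
    (ht1 : ∀ v, v ≠ i → ∀ c, t v false c + t v true c = 1)
    (l : ℝ) (hl1 : l < 1)
    (f : Fin m → ℝ) (hf : ∀ v, 0 < f v ∧ f v ≤ 1)
    (hρf : 0 < ρ false) (hρt : 0 < ρ true)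
    (htk : ∀ k : Fin m, k ≠ i → par k = i → ∀ d : Bool, 0 < t k d false) :
    f i =
      (∏ k ∈ Finset.univ.filter (fun k : Fin m => k ≠ i ∧ par k = i),
          ((∑ d : Bool,
              ((∑ y : Fin m → Bool,
                  if y i = true ∧ y k = d then qfun m i par ρ t y else 0) / ρ true) *
                ((∑ y : Fin m → Bool,
                    if y i = false ∧ y k = d then
                      qfun m i par ρ t y * Sfun m l f y else 0) /
                  (∑ y : Fin m → Bool,
                    if y i = false ∧ y k = d then qfun m i par ρ t y else 0))) /
            ((∑ y : Fin m → Bool,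
                if y i = false then qfun m i par ρ t y * Sfun m l f y else 0) /
              ρ false))⁻¹) *
        (((∑ y : Fin m → Bool,
            if y i = true then qfun m i par ρ t y * Sfun m l f y else 0) / ρ true) /
          ((∑ y : Fin m → Bool,
            if y i = false then qfun m i par ρ t y * Sfun m l f y else 0) / ρ false)) := by
  have hf' : ∀ v, 0 < f v := fun v => (hf v).1
  have hA : ∀ c, 0 < ∏ k ∈ children par i,
      forestSum par (tilt t (noisyOrWeight f)) (subtree par i k) (fun _ => c) := fun c =>
    prod_pos fun k _ => forestSum_noisyOr_pos t f hreach ht0 ht1 hf' (root_notMem_subtree k) _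
  change _ = (∏ k ∈ children par i, _) * _
  rw [prod_congr rfl fun k hk => by
      rw [correctionFactor_eq ρ t l f hreach ht0 ht1 hl1.ne hf' hρf.ne' hρt.ne' hk
        fun d => (htk k (mem_children.mp hk).1 (mem_children.mp hk).2 d).ne', inv_div],
    prod_div_distrib, sum_qfun_mul_Sfun_root ρ t l f hreach,
    sum_qfun_mul_Sfun_root ρ t l f hreach]
  have := hA true
  have := hA false
  have : 1 - l ≠ 0 := sub_ne_zero.mpr hl1.ne'
  simp only [noisyOrWeight_true, noisyOrWeight_false, mul_one]
  field_simp

/-- The serial correction estimator is exact: the failure probability of the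
root `Y_i` for a noisy-or observation `X` is recovered as
`f_i = (Π_{k child of i} c_k⁻¹) · (P(X=0|Y_i=1) / P(X=0|Y_i=0))`, where
`c_k = (Σ_d P(Y_k=d|Y_i=1)·P(X=0|Y_i=0,Y_k=d)) / P(X=0|Y_i=0)`. -/
theorem serial_correction_estimator (m : ℕ) (i : Fin m) (par : Fin m → Fin m)
    (hroot : par i = i) (hne : ∀ v, v ≠ i → par v ≠ v)
    (hreach : ∀ v, ∃ n : ℕ, par^[n] v = i)
    (ρ : Bool → ℝ) (hρ0 : ∀ c, 0 ≤ ρ c) (hρ1 : ρ false + ρ true = 1)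
    (t : Fin m → Bool → Bool → ℝ)
    (ht0 : ∀ v, v ≠ i → ∀ a c, 0 ≤ t v a c)
    (ht1 : ∀ v, v ≠ i → ∀ c, t v false c + t v true c = 1)
    (l : ℝ) (hl0 : 0 ≤ l) (hl1 : l < 1)
    (f : Fin m → ℝ) (hf : ∀ v, 0 < f v ∧ f v ≤ 1)
    (hρf : 0 < ρ false) (hρt : 0 < ρ true)
    (htk : ∀ k : Fin m, k ≠ i → par k = i → ∀ d : Bool, 0 < t k d false) :
    f i =
      (∏ k ∈ Finset.univ.filter (fun k : Fin m => k ≠ i ∧ par k = i),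
          ((∑ d : Bool,
              ((∑ y : Fin m → Bool,
                  if y i = true ∧ y k = d then qfun m i par ρ t y else 0) / ρ true) *
                ((∑ y : Fin m → Bool,
                    if y i = false ∧ y k = d then
                      qfun m i par ρ t y * Sfun m l f y else 0) /
                  (∑ y : Fin m → Bool,
                    if y i = false ∧ y k = d then qfun m i par ρ t y else 0))) /
            ((∑ y : Fin m → Bool,
                if y i = false then qfun m i par ρ t y * Sfun m l f y else 0) /
              ρ false))⁻¹) *
        (((∑ y : Fin m → Bool,
            if y i = true then qfun m i par ρ t y * Sfun m l f y else 0) / ρ true) /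
          ((∑ y : Fin m → Bool,
            if y i = false then qfun m i par ρ t y * Sfun m l f y else 0) / ρ false)) :=
  serial_correction_estimator_general m i par hreach ρ t ht0 ht1 l hl1 f hf hρf hρt htk
end
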